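/- (Proposition 2 of the paper.) Let g : P × Λ → E be square-integrable with respect to μ ⊗ ν, with overall mean ḡ and conditional means ḡ₁(p) = ∫ g(p,λ) dν(λ) and ḡ₂(λ) = ∫ g(p,λ) dμ(p). Set V_x = ∫_P ‖ḡ₁(p) − ḡ‖² dμ(p) and V_λ = ∫_Λ ‖ḡ₂(λ) − ḡ‖² dν(λ), and assume V_λ > 0. For integers K > 1 and B ≥ 1, let g̃ be the multi-mix estimator with B i.i.d. pairs and K shared i.i.d. mixing weights, and let g̃' be the large-batch mixup estimator with KB i.i.d. pairs and one shared mixing weight, so both use KB gradient computations. If B ≥ V_x / V_λ, then Var[g̃] ≤ Var[g̃']. -/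

import Mathlib

/-!
Write `f = g - ḡ` and expand `‖∑ᵢ ∑ₖ f (pᵢ, λₖ)‖²` over a grid of independent draws. The cross
term of two cells `(i, k)`, `(i', k')` has expectation `E‖f‖²`, `V_x`, `V_λ` or `‖E f‖² = 0`
according as the cells share both coordinates, only the pair, only the mixing weight, or neither.
For a `B × K` grid this gives `Var g̃ = (V + (K - 1) V_x + (B - 1) V_λ) / (KB)`; large-batch mixup
is the `KB × 1` grid, `Var g̃' = (V + (KB - 1) V_λ) / (KB)`. The difference
`Var g̃' - Var g̃ = (K - 1) (B V_λ - V_x) / (KB)` is nonnegative once `B ≥ V_x / V_λ`.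
-/

open MeasureTheory ProbabilityTheory Finset
open scoped RealInnerProductSpace

theorem MeasureTheory.measurePreserving_eval_pair {α ι : Type*} [MeasurableSpace α] [Fintype ι]
    (m : Measure α) [IsProbabilityMeasure m] {i j : ι} (hij : i ≠ j) :
    MeasurePreserving (fun x : ι → α => (x i, x j)) (Measure.pi fun _ => m) (m.prod m) := by
  have hindep : (fun x : ι → α => x i) ⟂ᵢ[Measure.pi fun _ => m] fun x => x j :=
    (iIndepFun_pi (μ := fun _ : ι => m) (X := fun _ => id) fun _ => aemeasurable_id).indepFun hij
  refine ⟨by fun_prop, ?_⟩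
  rw [hindep.map_prod_eq_prod_map_map (measurable_pi_apply i).aemeasurable
    (measurable_pi_apply j).aemeasurable,
    (measurePreserving_eval (fun _ => m) i).map_eq, (measurePreserving_eval (fun _ => m) j).map_eq]

theorem MeasureTheory.MeasurePreserving.integral_comp_of_aestronglyMeasurable
    {α β G : Type*} [MeasurableSpace α] [MeasurableSpace β]
    [NormedAddCommGroup G] [NormedSpace ℝ G] {mα : Measure α} {mβ : Measure β} {T : α → β}
    (hT : MeasurePreserving T mα mβ) {F : β → G} (hF : AEStronglyMeasurable F mβ) :
    ∫ x, F (T x) ∂mα = ∫ y, F y ∂mβ := by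
  rw [← hT.map_eq] at hF ⊢
  exact (integral_map hT.measurable.aemeasurable hF).symm

theorem smul_sum_sub_eq_smul_sum_sub {ι E : Type*} [AddCommGroup E] [Module ℝ E] {s : Finset ι}
    {c : ℝ} (hc : c * #s = 1) (x : ι → E) (y : E) :
    c • ∑ a ∈ s, x a - y = c • ∑ a ∈ s, (x a - y) := by
  rw [sum_sub_distrib, sum_const, smul_sub, ← Nat.cast_smul_eq_nsmul ℝ, smul_smul, hc, one_smul]

theorem MeasureTheory.Integrable.integral_sub_const {α E : Type*} [MeasurableSpace α]
    [NormedAddCommGroup E] [NormedSpace ℝ E] [CompleteSpace E] {m : Measure α}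
    [IsProbabilityMeasure m] {F : α → E} (hF : Integrable F m) (c : E) :
    ∫ a, (F a - c) ∂m = ∫ a, F a ∂m - c := by
  rw [integral_sub hF (integrable_const c), integral_const, probReal_univ, one_smul]

theorem Finset.sum_sum_sum_sum_ite_eq {ι κ R : Type*} [Fintype ι] [Fintype κ] [DecidableEq ι]
    [DecidableEq κ] [CommRing R] (a b c d : R) :
    ∑ i : ι, ∑ k : κ, ∑ i' : ι, ∑ k' : κ,
        (if i = i' then (if k = k' then a else b) else (if k = k' then c else d))
      = Fintype.card ι * Fintype.card κ
          * (a + (Fintype.card κ - 1) * b + (Fintype.card ι - 1) * c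
            + (Fintype.card ι - 1) * (Fintype.card κ - 1) * d) := by
  rcases isEmpty_or_nonempty ι with _ | _
  · simp
  rcases isEmpty_or_nonempty κ with _ | _
  · simp
  simp only [sum_ite_irrel, sum_ite, filter_eq, filter_ne, mem_univ, ↓reduceIte, sum_const,
    card_singleton, card_erase_of_mem, card_univ, one_smul, nsmul_eq_mul, smul_add,
    Nat.cast_sub Fintype.card_pos, Nat.cast_one]
  ring

section InnerProduct

variable {α β E : Type*} [MeasurableSpace α] [MeasurableSpace β]
  [NormedAddCommGroup E] [InnerProductSpace ℝ E]

theorem MeasureTheory.MemLp.integrable_inner {m : Measure α} {X Y : α → E}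
    (hX : MemLp X 2 m) (hY : MemLp Y 2 m) : Integrable (fun a => ⟪X a, Y a⟫) m :=
  (L2.integrable_inner (𝕜 := ℝ) (hX.toLp X) (hY.toLp Y)).congr <| by
    filter_upwards [hX.coeFn_toLp, hY.coeFn_toLp] with a hXa hYa
    rw [hXa, hYa]

theorem MeasureTheory.integral_norm_sum_sq {ι : Type*} (s : Finset ι) {m : Measure α}
    {X : ι → α → E} (hX : ∀ i ∈ s, MemLp (X i) 2 m) :
    ∫ a, ‖∑ i ∈ s, X i a‖ ^ 2 ∂m = ∑ i ∈ s, ∑ j ∈ s, ∫ a, ⟪X i a, X j a⟫ ∂m := by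
  have hint : ∀ i ∈ s, ∀ j ∈ s, Integrable (fun a => ⟪X i a, X j a⟫) m :=
    fun i hi j hj => (hX i hi).integrable_inner (hX j hj)
  simp_rw [← real_inner_self_eq_norm_sq, sum_inner, inner_sum]
  rw [integral_finsetSum _ fun i hi => integrable_finsetSum _ (hint i hi)]
  exact sum_congr rfl fun i hi => integral_finsetSum _ (hint i hi)

variable [CompleteSpace E]

theorem MeasureTheory.integral_inner_prod {mα : Measure α} {mβ : Measure β} [SFinite mα]
    [SFinite mβ] {F : α → E} {G : β → E} (hF : Integrable F mα) (hG : Integrable G mβ) :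
    ∫ z, ⟪F z.1, G z.2⟫ ∂(mα.prod mβ) = ⟪∫ a, F a ∂mα, ∫ b, G b ∂mβ⟫ := by
  have hint : Integrable (fun z : α × β => ⟪F z.1, G z.2⟫) (mα.prod mβ) := by
    refine (hF.norm.mul_prod hG.norm).mono' ?_ (.of_forall fun z => ?_)
    · exact continuous_inner.comp_aestronglyMeasurable (hF.1.comp_fst.prodMk hG.1.comp_snd)
    · simpa using abs_real_inner_le_norm (F z.1) (G z.2)
  simp_rw [integral_prod _ hint, integral_inner hG, real_inner_comm (∫ b, G b ∂mβ),
    integral_inner hF]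

end InnerProduct

section CrossTerms

variable {P Λ E : Type*} [MeasurableSpace P] [MeasurableSpace Λ]
  [NormedAddCommGroup E] [InnerProductSpace ℝ E]
  {μ : Measure P} {ν : Measure Λ} [IsProbabilityMeasure μ] [IsProbabilityMeasure ν]
  {ι κ : Type*} [Fintype ι] [Fintype κ] {f : P × Λ → E}

theorem integral_inner_comp_eval_prod_self (hf : MemLp f 2 (μ.prod ν)) (i : ι) (k : κ) :
    ∫ x : (ι → P) × (κ → Λ), ⟪f (x.1 i, x.2 k), f (x.1 i, x.2 k)⟫
        ∂((Measure.pi fun _ => μ).prod (Measure.pi fun _ => ν)) = ∫ z, ‖f z‖ ^ 2 ∂(μ.prod ν) := by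
  simp_rw [real_inner_self_eq_norm_sq]
  exact ((measurePreserving_eval (fun _ => μ) i).prod (measurePreserving_eval (fun _ => ν) k)
    ).integral_comp_of_aestronglyMeasurable (F := fun z => ‖f z‖ ^ 2) (hf.1.norm.pow 2)

variable [CompleteSpace E]

theorem integral_inner_comp_eval_prod_of_ne_snd (hf : MemLp f 2 (μ.prod ν)) (i : ι) {k k' : κ}
    (hk : k ≠ k') :
    ∫ x : (ι → P) × (κ → Λ), ⟪f (x.1 i, x.2 k), f (x.1 i, x.2 k')⟫
        ∂((Measure.pi fun _ => μ).prod (Measure.pi fun _ => ν))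
      = ∫ p, ‖∫ l, f (p, l) ∂ν‖ ^ 2 ∂μ := by
  have hT : MeasurePreserving (fun x : (ι → P) × (κ → Λ) => (x.1 i, (x.2 k, x.2 k')))
      ((Measure.pi fun _ => μ).prod (Measure.pi fun _ => ν)) (μ.prod (ν.prod ν)) :=
    (measurePreserving_eval _ i).prod (measurePreserving_eval_pair ν hk)
  have hint : Integrable (fun z : P × Λ × Λ => ⟪f (z.1, z.2.1), f (z.1, z.2.2)⟫)
      (μ.prod (ν.prod ν)) :=
    MemLp.integrable_inner
      (hf.comp_measurePreserving ((MeasurePreserving.id μ).prod measurePreserving_fst))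
      (hf.comp_measurePreserving ((MeasurePreserving.id μ).prod measurePreserving_snd))
  rw [hT.integral_comp_of_aestronglyMeasurable hint.1, integral_prod _ hint]
  refine integral_congr_ae ?_
  filter_upwards [hf.integrable one_le_two |>.prod_right_ae] with p hp
  rw [integral_inner_prod hp hp, real_inner_self_eq_norm_sq]

theorem integral_inner_comp_eval_prod_of_ne_fst (hf : MemLp f 2 (μ.prod ν)) {i i' : ι} (k : κ)
    (hi : i ≠ i') :
    ∫ x : (ι → P) × (κ → Λ), ⟪f (x.1 i, x.2 k), f (x.1 i', x.2 k)⟫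
        ∂((Measure.pi fun _ => μ).prod (Measure.pi fun _ => ν))
      = ∫ l, ‖∫ p, f (p, l) ∂μ‖ ^ 2 ∂ν := by
  rw [← integral_prod_swap]
  exact integral_inner_comp_eval_prod_of_ne_snd (f := f ∘ Prod.swap)
    (hf.comp_measurePreserving Measure.measurePreserving_swap) k hi

theorem integral_inner_comp_eval_prod_of_ne_of_ne (hf : MemLp f 2 (μ.prod ν)) {i i' : ι}
    {k k' : κ} (hi : i ≠ i') (hk : k ≠ k') :
    ∫ x : (ι → P) × (κ → Λ), ⟪f (x.1 i, x.2 k), f (x.1 i', x.2 k')⟫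
        ∂((Measure.pi fun _ => μ).prod (Measure.pi fun _ => ν))
      = ‖∫ z, f z ∂(μ.prod ν)‖ ^ 2 := by
  have hfi := hf.integrable one_le_two
  have hT : MeasurePreserving
      (fun x : (ι → P) × (κ → Λ) => ((x.1 i, x.1 i'), (x.2 k, x.2 k')))
      ((Measure.pi fun _ => μ).prod (Measure.pi fun _ => ν)) ((μ.prod μ).prod (ν.prod ν)) :=
    (measurePreserving_eval_pair μ hi).prod (measurePreserving_eval_pair ν hk)
  have hint : Integrable (fun z : (P × P) × (Λ × Λ) => ⟪f (z.1.1, z.2.1), f (z.1.2, z.2.2)⟫)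
      ((μ.prod μ).prod (ν.prod ν)) :=
    (hf.comp_measurePreserving (measurePreserving_fst.prod measurePreserving_fst)).integrable_inner
      (hf.comp_measurePreserving (measurePreserving_snd.prod measurePreserving_snd))
  rw [hT.integral_comp_of_aestronglyMeasurable hint.1, integral_prod _ hint, integral_prod _ hfi,
    ← real_inner_self_eq_norm_sq,
    ← integral_inner_prod hfi.integral_prod_left hfi.integral_prod_left]
  refine integral_congr_ae ?_
  filter_upwards [measurePreserving_fst.quasiMeasurePreserving.ae hfi.prod_right_ae,
    measurePreserving_snd.quasiMeasurePreserving.ae hfi.prod_right_ae] with w h₁ h₂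
  exact integral_inner_prod h₁ h₂

theorem integral_inner_comp_eval_prod [DecidableEq ι] [DecidableEq κ] (hf : MemLp f 2 (μ.prod ν))
    (i i' : ι) (k k' : κ) :
    ∫ x : (ι → P) × (κ → Λ), ⟪f (x.1 i, x.2 k), f (x.1 i', x.2 k')⟫
        ∂((Measure.pi fun _ => μ).prod (Measure.pi fun _ => ν))
      = if i = i' then
          if k = k' then ∫ z, ‖f z‖ ^ 2 ∂(μ.prod ν) else ∫ p, ‖∫ l, f (p, l) ∂ν‖ ^ 2 ∂μ
        else
          if k = k' then ∫ l, ‖∫ p, f (p, l) ∂μ‖ ^ 2 ∂ν else ‖∫ z, f z ∂(μ.prod ν)‖ ^ 2 := by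
  split_ifs with hi hk hk
  · subst hi hk; exact integral_inner_comp_eval_prod_self hf i k
  · subst hi; exact integral_inner_comp_eval_prod_of_ne_snd hf i hk
  · subst hk; exact integral_inner_comp_eval_prod_of_ne_fst hf k hi
  · exact integral_inner_comp_eval_prod_of_ne_of_ne hf hi hk

theorem integral_norm_sum_sum_sq (hf : MemLp f 2 (μ.prod ν)) :
    ∫ x : (ι → P) × (κ → Λ), ‖∑ i, ∑ k, f (x.1 i, x.2 k)‖ ^ 2
        ∂((Measure.pi fun _ => μ).prod (Measure.pi fun _ => ν))
      = Fintype.card ι * Fintype.card κ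
          * (∫ z, ‖f z‖ ^ 2 ∂(μ.prod ν)
            + (Fintype.card κ - 1) * ∫ p, ‖∫ l, f (p, l) ∂ν‖ ^ 2 ∂μ
            + (Fintype.card ι - 1) * ∫ l, ‖∫ p, f (p, l) ∂μ‖ ^ 2 ∂ν
            + (Fintype.card ι - 1) * (Fintype.card κ - 1) * ‖∫ z, f z ∂(μ.prod ν)‖ ^ 2) := by
  classical
  have hX : ∀ a ∈ (univ : Finset (ι × κ)),
      MemLp (fun x : (ι → P) × (κ → Λ) => f (x.1 a.1, x.2 a.2)) 2
        ((Measure.pi fun _ => μ).prod (Measure.pi fun _ => ν)) :=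
    fun a _ => hf.comp_measurePreserving
      ((measurePreserving_eval (fun _ => μ) a.1).prod (measurePreserving_eval (fun _ => ν) a.2))
  simp_rw [← Fintype.sum_prod_type']
  rw [integral_norm_sum_sq _ hX, ← Finset.sum_sum_sum_sum_ite_eq]
  simp only [Fintype.sum_prod_type, integral_inner_comp_eval_prod hf]

end CrossTerms

section Estimators

variable {P Λ E : Type*} [MeasurableSpace P] [MeasurableSpace Λ]
  [NormedAddCommGroup E] [InnerProductSpace ℝ E] [CompleteSpace E]
  {μ : Measure P} {ν : Measure Λ} [IsProbabilityMeasure μ] [IsProbabilityMeasure ν]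
  {g : P × Λ → E}

theorem integral_norm_smul_sum_sum_sub_integral_sq {ι κ : Type*} [Fintype ι] [Fintype κ]
    [Nonempty ι] [Nonempty κ] (hg : MemLp g 2 (μ.prod ν)) :
    ∫ x : (ι → P) × (κ → Λ),
        ‖((Fintype.card ι : ℝ) * Fintype.card κ)⁻¹ • (∑ i, ∑ k, g (x.1 i, x.2 k))
          - ∫ z, g z ∂(μ.prod ν)‖ ^ 2
        ∂((Measure.pi fun _ => μ).prod (Measure.pi fun _ => ν))
      = ((Fintype.card ι : ℝ) * Fintype.card κ)⁻¹
          * (∫ z, ‖g z - ∫ z, g z ∂(μ.prod ν)‖ ^ 2 ∂(μ.prod ν)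
            + (Fintype.card κ - 1) * ∫ p, ‖∫ l, g (p, l) ∂ν - ∫ z, g z ∂(μ.prod ν)‖ ^ 2 ∂μ
            + (Fintype.card ι - 1) * ∫ l, ‖∫ p, g (p, l) ∂μ - ∫ z, g z ∂(μ.prod ν)‖ ^ 2 ∂ν) := by
  set gbar := ∫ z, g z ∂(μ.prod ν)
  set c := ((Fintype.card ι : ℝ) * Fintype.card κ)⁻¹ with hc_def
  have hnm : (Fintype.card ι : ℝ) * Fintype.card κ ≠ 0 := by positivity
  have hc : c * #(univ : Finset (ι × κ)) = 1 := by
    rw [card_univ, Fintype.card_prod, Nat.cast_mul, hc_def, inv_mul_cancel₀ hnm]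
  have hc₂ : c ^ 2 * ((Fintype.card ι : ℝ) * Fintype.card κ) = c := by
    rw [sq, mul_assoc, hc_def, inv_mul_cancel₀ hnm, mul_one]
  have hgi := hg.integrable one_le_two
  have hcenter : ∀ x : (ι → P) × (κ → Λ),
      ‖c • (∑ i, ∑ k, g (x.1 i, x.2 k)) - gbar‖ ^ 2
        = c ^ 2 * ‖∑ i, ∑ k, (g (x.1 i, x.2 k) - gbar)‖ ^ 2 := fun x => by
    simp_rw [← Fintype.sum_prod_type']
    rw [smul_sum_sub_eq_smul_sum_sub hc, norm_smul, mul_pow, Real.norm_eq_abs, sq_abs]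
  have hVx : ∫ p, ‖∫ l, (g (p, l) - gbar) ∂ν‖ ^ 2 ∂μ = ∫ p, ‖∫ l, g (p, l) ∂ν - gbar‖ ^ 2 ∂μ := by
    refine integral_congr_ae ?_
    filter_upwards [hgi.prod_right_ae] with p hp
    rw [hp.integral_sub_const]
  have hVl : ∫ l, ‖∫ p, (g (p, l) - gbar) ∂μ‖ ^ 2 ∂ν = ∫ l, ‖∫ p, g (p, l) ∂μ - gbar‖ ^ 2 ∂ν := by
    refine integral_congr_ae ?_
    filter_upwards [hgi.prod_left_ae] with l hl
    rw [hl.integral_sub_const]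
  have hf₀ : ∫ z, (g z - gbar) ∂(μ.prod ν) = 0 := by rw [hgi.integral_sub_const, sub_self]
  simp_rw [hcenter]
  rw [integral_const_mul,
    integral_norm_sum_sum_sq (f := fun z => g z - gbar) (hg.sub (memLp_const gbar)),
    hVx, hVl, hf₀, norm_zero, zero_pow two_ne_zero, mul_zero, add_zero, ← mul_assoc, hc₂]

theorem integral_norm_smul_sum_sub_integral_sq {ι : Type*} [Fintype ι] [Nonempty ι]
    (hg : MemLp g 2 (μ.prod ν)) :
    ∫ x : (ι → P) × Λ,
        ‖(Fintype.card ι : ℝ)⁻¹ • (∑ i, g (x.1 i, x.2)) - ∫ z, g z ∂(μ.prod ν)‖ ^ 2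
        ∂((Measure.pi fun _ => μ).prod ν)
      = (Fintype.card ι : ℝ)⁻¹
          * (∫ z, ‖g z - ∫ z, g z ∂(μ.prod ν)‖ ^ 2 ∂(μ.prod ν)
            + (Fintype.card ι - 1) * ∫ l, ‖∫ p, g (p, l) ∂μ - ∫ z, g z ∂(μ.prod ν)‖ ^ 2 ∂ν) := by
  have hT : MeasurePreserving
      ((MeasurableEquiv.refl (ι → P)).prodCongr (MeasurableEquiv.funUnique Unit Λ))
      ((Measure.pi fun _ => μ).prod (Measure.pi fun _ : Unit => ν))
      ((Measure.pi fun _ => μ).prod ν) :=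
    (MeasurePreserving.id _).prod (measurePreserving_funUnique ν Unit)
  have h := integral_norm_smul_sum_sum_sub_integral_sq (ι := ι) (κ := Unit) hg
  simp only [Fintype.card_unit, Nat.cast_one, mul_one, sub_self, zero_mul, add_zero,
    Finset.univ_unique, Finset.sum_singleton] at h
  rw [← hT.integral_comp']
  exact h

end Estimators

/-- **Proposition 2: at equal computational cost, multi-mix has smaller
stochastic-gradient variance than large-batch mixup once the batch size is large
enough.** If `V_λ > 0`, `K > 1`, `B ≥ 1` and `B ≥ V_x / V_λ`, then the variance of the
multi-mix estimator (with `B` i.i.d. pairs and `K` shared i.i.d. mixing weights) is at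
most the variance of the large-batch mixup estimator (with `KB` i.i.d. pairs and one
shared mixing weight). -/
theorem multi_mix_vs_large_batch
    {P Λ E : Type*} [MeasurableSpace P] [MeasurableSpace Λ]
    [NormedAddCommGroup E] [InnerProductSpace ℝ E] [FiniteDimensional ℝ E]
    (μ : Measure P) (ν : Measure Λ) [IsProbabilityMeasure μ] [IsProbabilityMeasure ν]
    (g : P × Λ → E) (hg : MemLp g 2 (μ.prod ν))
    (gbar : E) (hgbar : gbar = ∫ x, g x ∂(μ.prod ν))
    (g1 : P → E) (hg1 : ∀ p, g1 p = ∫ l, g (p, l) ∂ν)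
    (g2 : Λ → E) (hg2 : ∀ l, g2 l = ∫ p, g (p, l) ∂μ)
    (Vx Vl : ℝ)
    (hVx : Vx = ∫ p, ‖g1 p - gbar‖ ^ 2 ∂μ)
    (hVl : Vl = ∫ l, ‖g2 l - gbar‖ ^ 2 ∂ν)
    (hVlpos : 0 < Vl)
    (B K : ℕ) (hB : 1 ≤ B) (hK : 1 < K)
    (hBlarge : Vx / Vl ≤ (B : ℝ)) :
    ∫ x : (Fin B → P) × (Fin K → Λ),
        ‖((K : ℝ) * B)⁻¹ • (∑ i : Fin B, ∑ k : Fin K, g (x.1 i, x.2 k)) - gbar‖ ^ 2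
      ∂((Measure.pi fun _ : Fin B => μ).prod (Measure.pi fun _ : Fin K => ν))
    ≤ ∫ x : (Fin (K * B) → P) × Λ,
        ‖((K : ℝ) * B)⁻¹ • (∑ i : Fin (K * B), g (x.1 i, x.2)) - gbar‖ ^ 2
      ∂((Measure.pi fun _ : Fin (K * B) => μ).prod ν) := by
  subst hgbar
  have : Nonempty (Fin B) := ⟨⟨0, hB⟩⟩
  have : Nonempty (Fin K) := ⟨⟨0, by omega⟩⟩
  have : Nonempty (Fin (K * B)) := ⟨⟨0, by positivity⟩⟩
  have hmulti := integral_norm_smul_sum_sum_sub_integral_sq (ι := Fin B) (κ := Fin K) hg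
  have hlarge := integral_norm_smul_sum_sub_integral_sq (ι := Fin (K * B)) (ν := ν) hg
  simp only [Fintype.card_fin, Nat.cast_mul, ← hg1, ← hg2, ← hVx, ← hVl] at hmulti hlarge
  rw [mul_comm (B : ℝ)] at hmulti
  rw [hmulti, hlarge]
  have hVx_le : Vx ≤ B * Vl := (div_le_iff₀ hVlpos).1 hBlarge
  have hK₁ : (0 : ℝ) ≤ K - 1 := by rw [sub_nonneg]; exact_mod_cast hK.le
  refine mul_le_mul_of_nonneg_left ?_ (by positivity)
  linarith [mul_le_mul_of_nonneg_left hVx_le hK₁]
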